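/- Under the local assumptions, let ϑ ∈ (0, 1), let x ∈ B(x*, δ) with F(x) ≠ 0 satisfy ‖F(x)‖ ≤ c₂²ϑ/(c₅c_F), let d be the LMMSS direction at x (the solution of (J(x)ᵀJ(x) + λ(x)LᵀL)d = −J(x)ᵀF(x) with λ(x) = ‖F(x)‖²), and suppose x + d ∈ B(x*, δ). Then ‖F(x + d)‖ ≤ ϑ‖F(x)‖; that is, the full Levenberg–Marquardt step achieves the prescribed linear residual decrease. -/

import Mathlib

open Matrix Metric

/-- The continuous linear map on Euclidean spaces induced by a real matrix. -/
noncomputable def matCLM {m n : ℕ} (A : Matrix (Fin m) (Fin n) ℝ) :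
    EuclideanSpace ℝ (Fin n) →L[ℝ] EuclideanSpace ℝ (Fin m) :=
  LinearMap.toContinuousLinearMap (Matrix.toEuclideanLin A)

/-- `c₃ = (1/(c₂√γ))·√(c₁² + c₂²(nL² + c_F²))`, where `nL = ‖L‖` (spectral norm). -/
noncomputable def lmC3 (c1 c2 cF γ nL : ℝ) : ℝ :=
  (1 / (c2 * Real.sqrt γ)) * Real.sqrt (c1 ^ 2 + c2 ^ 2 * (nL ^ 2 + cF ^ 2))

/-- `c₄ = √(c₁² + c_F²·nL²)`, where `nL = ‖L‖` (spectral norm). -/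
noncomputable def lmC4 (c1 cF nL : ℝ) : ℝ :=
  Real.sqrt (c1 ^ 2 + cF ^ 2 * nL ^ 2)

/-- `c₅ = (c₁c₃² + c₄)/c₂`. -/
noncomputable def lmC5 (c1 c2 cF γ nL : ℝ) : ℝ :=
  (c1 * (lmC3 c1 c2 cF γ nL) ^ 2 + lmC4 c1 cF nL) / c2

lemma matCLM_mul {a b c : ℕ} (A : Matrix (Fin a) (Fin b) ℝ) (B : Matrix (Fin b) (Fin c) ℝ)
    (v : EuclideanSpace ℝ (Fin c)) : matCLM (A * B) v = matCLM A (matCLM B v) := by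
  simp [matCLM, Matrix.toEuclideanLin_eq_toLin, Matrix.toLin_mul _ (PiLp.basisFun 2 ℝ (Fin b)) _]

lemma matCLM_add {a b : ℕ} (A B : Matrix (Fin a) (Fin b) ℝ) (v : EuclideanSpace ℝ (Fin b)) :
    matCLM (A + B) v = matCLM A v + matCLM B v := by
  simp [matCLM]

lemma matCLM_smul {a b : ℕ} (c : ℝ) (A : Matrix (Fin a) (Fin b) ℝ) (v : EuclideanSpace ℝ (Fin b)) :
    matCLM (c • A) v = c • matCLM A v := by
  simp [matCLM]

lemma inner_matCLM_transpose {a b : ℕ} (A : Matrix (Fin a) (Fin b) ℝ)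
    (u : EuclideanSpace ℝ (Fin a)) (v : EuclideanSpace ℝ (Fin b)) :
    inner ℝ (matCLM Aᵀ u) v = (inner ℝ u (matCLM A v) : ℝ) := by
  have h : Aᵀ = Aᴴ := (Matrix.conjTranspose_eq_transpose_of_trivial A).symm
  rw [h]
  simp only [matCLM, LinearMap.coe_toContinuousLinearMap',
    Matrix.toEuclideanLin_conjTranspose_eq_adjoint]
  exact LinearMap.adjoint_inner_left _ _ _


set_option maxHeartbeats 4000000 in
lemma lm_arith (c1 c2 cF γ nL ρ ϑ fx a b jd dd Fn : ℝ)
    (hc1pos : 0 < c1) (hc2pos : 0 < c2) (hcFpos : 0 < cF) (hγ : 0 < γ)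
    (hnL : 0 ≤ nL) (hρpos : 0 < ρ) (hϑ0 : 0 < ϑ)
    (ha : 0 ≤ a) (hb : 0 ≤ b) (hjd : 0 ≤ jd) (hdd : 0 ≤ dd) (hfx : 0 < fx)
    (hFxρ : c2 * ρ ≤ fx) (hFxcF : fx ≤ cF * ρ)
    (hchain : a ^ 2 + fx ^ 2 * b ^ 2 ≤ c1 ^ 2 * ρ ^ 4 + fx ^ 2 * (nL ^ 2 * ρ ^ 2))
    (hJd : jd ≤ fx)
    (hγd : γ * dd ^ 2 ≤ jd ^ 2 + b ^ 2)
    (hFxd : Fn ≤ a + c1 * dd ^ 2)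
    (hsmall : fx ≤ c2 ^ 2 * ϑ / (lmC5 c1 c2 cF γ nL * cF)) :
    Fn ≤ ϑ * fx := by
  set c3 : ℝ := lmC3 c1 c2 cF γ nL with hc3def
  set c4 : ℝ := lmC4 c1 cF nL with hc4def
  set c5 : ℝ := lmC5 c1 c2 cF γ nL with hc5def
  have hρ0 : 0 ≤ ρ := hρpos.le
  have hlamlow : c2 ^ 2 * ρ ^ 2 ≤ fx ^ 2 := by nlinarith [mul_nonneg hc2pos.le hρ0]
  have hlamup : fx ^ 2 ≤ cF ^ 2 * ρ ^ 2 := by nlinarith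
  have hc4nn : 0 ≤ c4 := Real.sqrt_nonneg _
  have hc4sq : c4 ^ 2 = c1 ^ 2 + cF ^ 2 * nL ^ 2 := by
    rw [hc4def, lmC4, Real.sq_sqrt (by positivity)]
  have hJdF : a ≤ c4 * ρ ^ 2 := by
    have h0 : a ^ 2 ≤ (c1 ^ 2 + cF ^ 2 * nL ^ 2) * ρ ^ 4 := by
      nlinarith [mul_nonneg (mul_nonneg hfx.le hfx.le) (sq_nonneg b),
        mul_le_mul_of_nonneg_right hlamup (by positivity : (0:ℝ) ≤ nL ^ 2 * ρ ^ 2)]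
    have h2 : (c4 * ρ ^ 2) ^ 2 = (c1 ^ 2 + cF ^ 2 * nL ^ 2) * ρ ^ 4 := by
      rw [mul_pow, hc4sq]; ring
    nlinarith [mul_nonneg hc4nn (sq_nonneg ρ)]
  have hLd2 : c2 ^ 2 * b ^ 2 ≤ c1 ^ 2 * ρ ^ 2 + c2 ^ 2 * nL ^ 2 * ρ ^ 2 := by
    have hTX : fx ^ 2 * (b ^ 2 - nL ^ 2 * ρ ^ 2) ≤ c1 ^ 2 * ρ ^ 4 := by
      nlinarith [sq_nonneg a]
    rcases le_or_gt (b ^ 2 - nL ^ 2 * ρ ^ 2) 0 with h | h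
    · nlinarith [mul_nonneg (sq_nonneg c1) (sq_nonneg ρ)]
    · have h1 : c2 ^ 2 * ρ ^ 2 * (b ^ 2 - nL ^ 2 * ρ ^ 2)
          ≤ fx ^ 2 * (b ^ 2 - nL ^ 2 * ρ ^ 2) :=
        mul_le_mul_of_nonneg_right hlamlow h.le
      have hρ2 : 0 < ρ ^ 2 := by positivity
      have h3 : c2 ^ 2 * (b ^ 2 - nL ^ 2 * ρ ^ 2) ≤ c1 ^ 2 * ρ ^ 2 := by nlinarith
      nlinarith
  have hc3sq' : c2 ^ 2 * γ * c3 ^ 2 = c1 ^ 2 + c2 ^ 2 * (nL ^ 2 + cF ^ 2) := by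
    rw [hc3def, lmC3, mul_pow, div_pow, one_pow, mul_pow, Real.sq_sqrt hγ.le,
      Real.sq_sqrt (by positivity : (0:ℝ) ≤ c1 ^ 2 + c2 ^ 2 * (nL ^ 2 + cF ^ 2))]
    field_simp
  have hc3nn : 0 ≤ c3 := by
    rw [hc3def, lmC3]
    positivity
  have hd2 : dd ^ 2 ≤ c3 ^ 2 * ρ ^ 2 := by
    have hJd2 : jd ^ 2 ≤ cF ^ 2 * ρ ^ 2 := by nlinarith
    have h1 : c2 ^ 2 * γ * dd ^ 2 ≤ c2 ^ 2 * γ * (c3 ^ 2 * ρ ^ 2) := by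
      have hrhs : c2 ^ 2 * γ * (c3 ^ 2 * ρ ^ 2)
          = (c1 ^ 2 + c2 ^ 2 * (nL ^ 2 + cF ^ 2)) * ρ ^ 2 := by
        rw [← mul_assoc, hc3sq']
      rw [hrhs]
      nlinarith [mul_le_mul_of_nonneg_left hγd (sq_nonneg c2)]
    exact (mul_le_mul_iff_right₀ (by positivity : (0:ℝ) < c2 ^ 2 * γ)).mp h1
  have hFn2 : Fn ≤ (c4 + c1 * c3 ^ 2) * ρ ^ 2 := by
    nlinarith [mul_le_mul_of_nonneg_left hd2 hc1pos.le]
  have hc4pos : 0 < c4 := by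
    rw [hc4def, lmC4]
    exact Real.sqrt_pos.mpr (by positivity)
  have hc5pos : 0 < c5 := by
    rw [hc5def, lmC5, ← hc3def, ← hc4def]
    exact div_pos (by nlinarith [sq_nonneg c3]) hc2pos
  have hc5eq : c5 * c2 = c1 * c3 ^ 2 + c4 := by
    rw [hc5def, lmC5, ← hc3def, ← hc4def]
    field_simp
  have hC : c5 * cF * fx ≤ c2 ^ 2 * ϑ := by
    have hpos : 0 < c5 * cF := mul_pos hc5pos hcFpos
    have := (le_div_iff₀ hpos).mp hsmall
    linarith
  have hc2cF : c2 ≤ cF := by nlinarith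
  have hgoal : (c4 + c1 * c3 ^ 2) * ρ ^ 2 ≤ ϑ * fx := by
    have e1 : c5 * cF * (c2 * ρ) ≤ c5 * cF * fx :=
      mul_le_mul_of_nonneg_left hFxρ (mul_pos hc5pos hcFpos).le
    have e3 : c5 * cF * ρ ≤ c2 * ϑ := by
      have h : c2 * (c5 * cF * ρ) ≤ c2 * (c2 * ϑ) := by nlinarith
      exact (mul_le_mul_iff_right₀ hc2pos).mp h
    have e5 : c5 * c2 * ρ ≤ c2 * ϑ := by
      nlinarith [mul_nonneg (mul_nonneg hc5pos.le hρ0) (sub_nonneg.mpr hc2cF)]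
    have e6 : c5 * c2 * ρ ^ 2 ≤ c2 * ϑ * ρ := by nlinarith
    have e7 : ϑ * (c2 * ρ) ≤ ϑ * fx := mul_le_mul_of_nonneg_left hFxρ hϑ0.le
    nlinarith [hc5eq]
  linarith

set_option maxHeartbeats 6000000 in
/-- under the local assumptions, if `x ∈ B(x*, δ)` with `F(x) ≠ 0`,
`‖F(x)‖ ≤ c₂²ϑ/(c₅c_F)`, `d` is the LMMSS direction at `x`, and `x + d ∈ B(x*, δ)`,
then the full step achieves the linear residual decrease `‖F(x + d)‖ ≤ ϑ‖F(x)‖`. -/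
theorem lmmss_full_step_residual_decrease
    (n m p : ℕ)
    (F : EuclideanSpace ℝ (Fin n) → EuclideanSpace ℝ (Fin m))
    (J : EuclideanSpace ℝ (Fin n) → Matrix (Fin m) (Fin n) ℝ)
    (hdiff : ∀ x, HasFDerivAt F (matCLM (J x)) x)
    (hJcont : Continuous J)
    (hne : ∃ x, F x = 0)
    (xstar : EuclideanSpace ℝ (Fin n)) (hxstar : F xstar = 0)
    (δ : ℝ) (hδ0 : 0 < δ) (hδh : δ < 1 / 2)
    (c1 : ℝ) (hc1pos : 0 < c1)
    (hc1 : ∀ x ∈ closedBall xstar (2 * δ), ∀ y ∈ closedBall xstar (2 * δ),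
      ‖matCLM (J y) (x - y) - (F x - F y)‖ ≤ c1 * ‖x - y‖ ^ 2)
    (cF : ℝ) (hcFpos : 0 < cF)
    (hcF : ∀ x ∈ closedBall xstar (2 * δ), ∀ y ∈ closedBall xstar (2 * δ),
      ‖F x - F y‖ ≤ cF * ‖x - y‖)
    (c2 : ℝ) (hc2pos : 0 < c2)
    (hc2 : ∀ x ∈ closedBall xstar (2 * δ),
      c2 * infDist x {y | F y = 0} ≤ ‖F x‖)
    (L : Matrix (Fin p) (Fin n) ℝ) (γ : ℝ) (hγ : 0 < γ)
    (hcomp : ∀ (x : EuclideanSpace ℝ (Fin n)) (v : EuclideanSpace ℝ (Fin n)),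
      ‖matCLM (J x) v‖ ^ 2 + ‖matCLM L v‖ ^ 2 ≥ γ * ‖v‖ ^ 2)
    (ϑ : ℝ) (hϑ : ϑ ∈ Set.Ioo (0 : ℝ) 1)
    (x : EuclideanSpace ℝ (Fin n)) (hx : x ∈ closedBall xstar δ) (hFx : F x ≠ 0)
    (hFsmall : ‖F x‖ ≤ c2 ^ 2 * ϑ / (lmC5 c1 c2 cF γ ‖matCLM L‖ * cF))
    (d : EuclideanSpace ℝ (Fin n))
    (hd : matCLM ((J x)ᵀ * J x + ‖F x‖ ^ 2 • (Lᵀ * L)) d = -(matCLM (J x)ᵀ (F x)))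
    (hxplus : x + d ∈ closedBall xstar δ) :
    ‖F (x + d)‖ ≤ ϑ * ‖F x‖ := by
  obtain ⟨hϑ0, hϑ1⟩ := hϑ
  set nL : ℝ := ‖matCLM L‖ with hnL
  set Jc := matCLM (J x) with hJc
  set Lc := matCLM L with hLc
  set lam : ℝ := ‖F x‖ ^ 2 with hlam
  have hFcont : Continuous F := by
    have : Differentiable ℝ F := fun y => (hdiff y).differentiableAt
    exact this.continuous
  have hZclosed : IsClosed {y : EuclideanSpace ℝ (Fin n) | F y = 0} :=
    isClosed_eq hFcont continuous_const
  obtain ⟨xb, hxbZ, hxbd⟩ :=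
    hZclosed.exists_infDist_eq_dist ⟨xstar, hxstar⟩ x
  have hFxb : F xb = 0 := hxbZ
  set ρ : ℝ := infDist x {y : EuclideanSpace ℝ (Fin n) | F y = 0} with hρ
  have hρδ : ρ ≤ δ := by
    have h1 : ρ ≤ dist x xstar := infDist_le_dist_of_mem hxstar
    have h2 : dist x xstar ≤ δ := mem_closedBall.mp hx
    linarith
  have hx2 : x ∈ closedBall xstar (2 * δ) := by
    have := mem_closedBall.mp hx; exact mem_closedBall.mpr (by linarith)
  have hxd2 : x + d ∈ closedBall xstar (2 * δ) := by
    have := mem_closedBall.mp hxplus; exact mem_closedBall.mpr (by linarith)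
  have hxb2 : xb ∈ closedBall xstar (2 * δ) := by
    have h1 : dist xb xstar ≤ dist xb x + dist x xstar := dist_triangle _ _ _
    have h2 : dist xb x = ρ := by rw [dist_comm, ← hxbd]
    have h3 : dist x xstar ≤ δ := mem_closedBall.mp hx
    exact mem_closedBall.mpr (by linarith)
  have hFxρ : c2 * ρ ≤ ‖F x‖ := hc2 x hx2
  have hρ0 : 0 ≤ ρ := infDist_nonneg
  have hρpos : 0 < ρ := by
    rcases hρ0.lt_or_eq with h | h
    · exact h
    · exfalso
      have h1 : dist x xb = 0 := by rw [← hxbd, ← h]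
      have h2 : x = xb := by rwa [dist_eq_zero] at h1
      exact hFx (h2 ▸ hFxb)
  have hxxb : ‖x - xb‖ = ρ := by rw [← dist_eq_norm, hxbd]
  have hFxcF : ‖F x‖ ≤ cF * ρ := by
    have h := hcF x hx2 xb hxb2
    rw [hFxb, sub_zero, hxxb] at h
    exact h
  have hlampos : 0 < lam := by
    have : 0 < ‖F x‖ := norm_pos_iff.mpr hFx
    positivity
  -- normal equations
  have hNE : ∀ v : EuclideanSpace ℝ (Fin n),
      (inner ℝ (Jc d) (Jc v) : ℝ) + lam * inner ℝ (Lc d) (Lc v) + inner ℝ (F x) (Jc v) = 0 := by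
    intro v
    have h1 := congrArg (fun w : EuclideanSpace ℝ (Fin n) => (inner ℝ w v : ℝ)) hd
    rw [matCLM_add, matCLM_smul, matCLM_mul, matCLM_mul, inner_add_left,
      real_inner_smul_left, inner_matCLM_transpose, inner_matCLM_transpose,
      inner_neg_left, inner_matCLM_transpose] at h1
    rw [← hJc, ← hLc] at h1
    linarith
  have hJd : ‖Jc d‖ ≤ ‖F x‖ := by
    have h := hNE d
    rw [real_inner_self_eq_norm_sq, real_inner_self_eq_norm_sq] at h
    have h1 : -(inner ℝ (F x) (Jc d) : ℝ) ≤ ‖F x‖ * ‖Jc d‖ := by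
      have := abs_real_inner_le_norm (F x) (Jc d)
      have := neg_abs_le (inner ℝ (F x) (Jc d) : ℝ)
      linarith
    have h2 : ‖Jc d‖ ^ 2 ≤ ‖F x‖ * ‖Jc d‖ := by
      linarith [mul_nonneg hlampos.le (sq_nonneg ‖Lc d‖)]
    nlinarith [norm_nonneg (Jc d), norm_nonneg (F x)]
  -- minimization property at s = xb - x
  set s : EuclideanSpace ℝ (Fin n) := xb - x with hs
  have hnorms : ‖s‖ = ρ := by rw [hs, norm_sub_rev, hxxb]
  have hmin : ‖Jc d + F x‖ ^ 2 + lam * ‖Lc d‖ ^ 2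
      ≤ ‖Jc s + F x‖ ^ 2 + lam * ‖Lc s‖ ^ 2 := by
    set e : EuclideanSpace ℝ (Fin n) := s - d with he
    have hsde : s = d + e := by rw [he]; abel
    have h1 : Jc s + F x = (Jc d + F x) + Jc e := by rw [hsde, map_add]; abel
    have h2 : Lc s = Lc d + Lc e := by rw [hsde, map_add]
    have e1 : ‖(Jc d + F x) + Jc e‖ ^ 2
        = ‖Jc d + F x‖ ^ 2 + 2 * inner ℝ (Jc d + F x) (Jc e) + ‖Jc e‖ ^ 2 :=
      norm_add_sq_real _ _
    have e2 : ‖Lc d + Lc e‖ ^ 2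
        = ‖Lc d‖ ^ 2 + 2 * inner ℝ (Lc d) (Lc e) + ‖Lc e‖ ^ 2 :=
      norm_add_sq_real _ _
    have hcross := hNE e
    have h3 : (inner ℝ (Jc d + F x) (Jc e) : ℝ) = inner ℝ (Jc d) (Jc e) + inner ℝ (F x) (Jc e) :=
      inner_add_left _ _ _
    rw [h1, h2, e1, e2]
    have hdist : lam * (‖Lc d‖ ^ 2 + 2 * inner ℝ (Lc d) (Lc e) + ‖Lc e‖ ^ 2)
        = lam * ‖Lc d‖ ^ 2 + 2 * (lam * inner ℝ (Lc d) (Lc e)) + lam * ‖Lc e‖ ^ 2 := by ring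
    linarith [hcross, h3, sq_nonneg ‖Jc e‖, mul_nonneg hlampos.le (sq_nonneg ‖Lc e‖), hdist]
  -- bound the value at s
  have hJsF : ‖Jc s + F x‖ ≤ c1 * ρ ^ 2 := by
    have h := hc1 xb hxb2 x hx2
    rw [hFxb] at h
    have he2 : matCLM (J x) (xb - x) - (0 - F x) = Jc s + F x := by
      rw [hJc, hs]; abel
    have hn : ‖xb - x‖ = ρ := by rw [norm_sub_rev, hxxb]
    rw [he2, hn] at h
    exact h
  have hLsb : ‖Lc s‖ ≤ nL * ρ := by
    have h := Lc.le_opNorm s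
    rw [hnorms] at h
    rw [hnL]
    exact h
  have hφs : ‖Jc s + F x‖ ^ 2 + lam * ‖Lc s‖ ^ 2
      ≤ c1 ^ 2 * ρ ^ 4 + lam * (nL ^ 2 * ρ ^ 2) := by
    have h1 : ‖Jc s + F x‖ ^ 2 ≤ (c1 * ρ ^ 2) ^ 2 := pow_le_pow_left₀ (norm_nonneg _) hJsF 2
    have h2 : ‖Lc s‖ ^ 2 ≤ (nL * ρ) ^ 2 := pow_le_pow_left₀ (norm_nonneg _) hLsb 2
    have h3 : lam * ‖Lc s‖ ^ 2 ≤ lam * (nL * ρ) ^ 2 := mul_le_mul_of_nonneg_left h2 hlampos.le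
    have h4 : (c1 * ρ ^ 2) ^ 2 + lam * (nL * ρ) ^ 2 = c1 ^ 2 * ρ ^ 4 + lam * (nL ^ 2 * ρ ^ 2) := by
      ring
    linarith
  have hchain : ‖Jc d + F x‖ ^ 2 + ‖F x‖ ^ 2 * ‖Lc d‖ ^ 2
      ≤ c1 ^ 2 * ρ ^ 4 + ‖F x‖ ^ 2 * (nL ^ 2 * ρ ^ 2) := hmin.trans hφs
  -- Taylor bound at x + d
  have ht := hc1 (x + d) hxd2 x hx2
  have hxd : x + d - x = d := by abel
  rw [hxd] at ht
  have hFxd : ‖F (x + d)‖ ≤ ‖Jc d + F x‖ + c1 * ‖d‖ ^ 2 := by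
    have heq : F (x + d) = (Jc d + F x) - (matCLM (J x) d - (F (x + d) - F x)) := by
      rw [hJc]; abel
    calc ‖F (x + d)‖ = ‖(Jc d + F x) - (matCLM (J x) d - (F (x + d) - F x))‖ := by rw [← heq]
      _ ≤ ‖Jc d + F x‖ + ‖matCLM (J x) d - (F (x + d) - F x)‖ := norm_sub_le _ _
      _ ≤ ‖Jc d + F x‖ + c1 * ‖d‖ ^ 2 := by linarith
  exact lm_arith c1 c2 cF γ nL ρ ϑ ‖F x‖ ‖Jc d + F x‖ ‖Lc d‖ ‖Jc d‖ ‖d‖ ‖F (x + d)‖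
    hc1pos hc2pos hcFpos hγ (norm_nonneg _) hρpos hϑ0
    (norm_nonneg _) (norm_nonneg _) (norm_nonneg _) (norm_nonneg _)
    (norm_pos_iff.mpr hFx) hFxρ hFxcF hchain hJd (hcomp x d)
    (by linarith [hFxd]) hFsmall
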